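/- Let T be a rooted tree in which every internal node has at most two non-leaf children (a bifurcatable tree). Let T' be the strictly bifurcating tree obtained by deleting leaves (pendant-pruning) so that every internal node keeps exactly its non-leaf children, plus leaf children as needed to have exactly two children. Then N(T') = N(T), where N counts labeled histories. -/

import Mathlib

inductive RTree : Type where
  | leaf : RTree
  | node : List RTree → RTree

namespace RTree

def leaves : RTree → ℕ
  | leaf => 1
  | node cs => (cs.attach.map fun c => leaves c.1).sum
decreasing_by simp only [node.sizeOf_spec]; have := List.sizeOf_lt_of_mem c.2; omega

def wcount : RTree → ℕ
  | leaf => 0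
  | node cs => 1 + (cs.attach.map fun c => wcount c.1).sum
decreasing_by simp only [node.sizeOf_spec]; have := List.sizeOf_lt_of_mem c.2; omega

def delta : RTree → ℕ
  | leaf => 0
  | node cs => 1 + (cs.attach.map fun c => delta c.1).foldr max 0
decreasing_by simp only [node.sizeOf_spec]; have := List.sizeOf_lt_of_mem c.2; omega

def prodW : RTree → ℕ
  | leaf => 1
  | node cs =>
      (1 + (cs.attach.map fun c => wcount c.1).sum) * (cs.attach.map fun c => prodW c.1).prod
decreasing_by simp only [node.sizeOf_spec]; have := List.sizeOf_lt_of_mem c.2; omega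

def subtreeAt : List ℕ → RTree → Option RTree
  | [], t => some t
  | _ :: _, leaf => none
  | i :: p, node cs => cs[i]?.bind (fun c => subtreeAt p c)

def Internal (T : RTree) : Type := {p : List ℕ // ∃ cs, subtreeAt p T = some (node cs)}

def IsLabeledHistory (T : RTree) (f : Internal T → Fin (wcount T)) : Prop :=
  Function.Bijective f ∧ ∀ u v : Internal T, v.1 <+: u.1 → v.1 ≠ u.1 → f u < f v

noncomputable def N (T : RTree) : ℕ :=
  Nat.card {f : Internal T → Fin (wcount T) // IsLabeledHistory T f}

def IsTieHistory (T : RTree) (z : ℕ) (f : Internal T → Fin z) : Prop :=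
  Function.Surjective f ∧ ∀ u v : Internal T, v.1 <+: u.1 → v.1 ≠ u.1 → f u < f v

noncomputable def E (T : RTree) (z : ℕ) : ℕ :=
  Nat.card {f : Internal T → Fin z // IsTieHistory T z f}

noncomputable def NTie (T : RTree) : ℕ :=
  Nat.card ((z : ℕ) × {f : Internal T → Fin z // IsTieHistory T z f})

def replaceAt : List ℕ → RTree → RTree → RTree
  | [], _, s => s
  | _ :: _, leaf, _ => leaf
  | i :: p, node cs, s => node (cs.set i (replaceAt p (cs.getD i leaf) s))

end RTree

namespace RTree

/-- `true` iff the tree is not a single leaf. -/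
def nonLeaf : RTree → Bool
  | leaf => false
  | node _ => true

/-- Pendant-pruning: every internal node keeps its (pruned) non-leaf children,
plus leaf children as needed so that it has exactly two children. -/
def prune : RTree → RTree
  | leaf => leaf
  | node cs =>
      node (((cs.attach.filter fun c => nonLeaf c.1).map fun c => prune c.1) ++
        List.replicate (2 - (cs.filter nonLeaf).length) leaf)
decreasing_by simp only [node.sizeOf_spec]; have := List.sizeOf_lt_of_mem c.2; omega

/-!
Pruning deletes only leaves, so the internal nodes of `T` and of `prune T` correspond
bijectively: at a node, the `j`-th child of `T` becomes the `k`-th child of the pruned node,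
where `k` counts the non-leaf children before position `j`. This correspondence of paths
preserves and reflects the ancestor (prefix) relation, and pruning keeps the number of internal
nodes, so labeled histories transport along it.
-/

end RTree

namespace List

variable {α : Type*}

theorem getElem?_filter_eq_getElem?_findIdxNth (p : α → Bool) (xs : List α) (n : ℕ) :
    (xs.filter p)[n]? = xs[xs.findIdxNth p n]? := by
  induction xs generalizing n <;> grind

theorem sum_map_filter_of_eq_zero {M : Type*} [AddMonoid M] (p : α → Bool) (f : α → M)
    (hf : ∀ a, p a = false → f a = 0) (xs : List α) :
    ((xs.filter p).map f).sum = (xs.map f).sum := by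
  induction xs with
  | nil => rfl
  | cons a xs ih => cases h : p a <;> simp [h, ih, hf]

end List

namespace RTree

theorem wcount_node (cs : List RTree) : wcount (node cs) = 1 + (cs.map wcount).sum := by
  simp [wcount]

theorem wcount_eq_zero_of_nonLeaf_eq_false {t : RTree} (h : nonLeaf t = false) :
    wcount t = 0 := by
  cases t with
  | leaf => simp [wcount]
  | node cs => simp [nonLeaf] at h

theorem prune_node (cs : List RTree) :
    prune (node cs) = node ((cs.filter nonLeaf).map prune ++
      List.replicate (2 - (cs.filter nonLeaf).length) leaf) := by
  simp [prune, List.filter_attach]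

theorem wcount_prune : (t : RTree) → wcount (prune t) = wcount t
  | leaf => by simp [prune]
  | node cs => by
    have ih : ∀ c ∈ cs, (wcount ∘ prune) c = wcount c := fun c _ => wcount_prune c
    rw [prune_node, wcount_node, wcount_node, List.map_append, List.sum_append, List.map_map,
      List.map_congr_left fun c hc => ih c (List.mem_of_mem_filter hc),
      List.sum_map_filter_of_eq_zero _ _ fun _ => wcount_eq_zero_of_nonLeaf_eq_false]
    simp [wcount]

def IsInternal (t : RTree) (p : List ℕ) : Prop := ∃ cs, subtreeAt p t = some (node cs)

theorem not_isInternal_leaf (p : List ℕ) : ¬ IsInternal leaf p := by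
  rintro ⟨cs, h⟩
  cases p <;> simp [subtreeAt] at h

theorem nonLeaf_of_isInternal {t : RTree} {p : List ℕ} (h : IsInternal t p) : nonLeaf t := by
  cases t
  · exact absurd h (not_isInternal_leaf p)
  · rfl

theorem isInternal_node_nil (cs : List RTree) : IsInternal (node cs) [] := ⟨cs, rfl⟩

theorem isInternal_node_cons (cs : List RTree) (j : ℕ) (p : List ℕ) :
    IsInternal (node cs) (j :: p) ↔ IsInternal (cs.getD j leaf) p := by
  rcases lt_or_ge j cs.length with hj | hj
  · simp [IsInternal, subtreeAt, List.getElem?_eq_getElem hj]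
  · simp only [List.getD_eq_getElem?_getD, List.getElem?_eq_none hj, Option.getD_none,
      iff_false_intro (not_isInternal_leaf p), iff_false]
    simp [IsInternal, subtreeAt, List.getElem?_eq_none hj]

theorem isInternal_prune_node_cons (cs : List RTree) (i : ℕ) (q : List ℕ) :
    IsInternal (prune (node cs)) (i :: q) ↔
      i < cs.countP nonLeaf ∧ IsInternal (prune (cs.getD (cs.findIdxNth nonLeaf i) leaf)) q := by
  rw [prune_node, isInternal_node_cons]
  rcases lt_or_ge i (cs.countP nonLeaf) with hi | hi
  · have hlt : i < ((cs.filter nonLeaf).map prune).length := by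
      simpa [List.countP_eq_length_filter] using hi
    have hidx := List.findIdxNth_lt_length_of_lt_countP hi
    simp only [List.getD_eq_getElem?_getD, List.getElem?_append_left hlt, List.getElem?_map,
      List.getElem?_filter_eq_getElem?_findIdxNth, List.getElem?_eq_getElem hidx, hi, true_and]
    rfl
  · have hge : ((cs.filter nonLeaf).map prune).length ≤ i := by
      simpa [List.countP_eq_length_filter] using hi
    have hleaf : (((cs.filter nonLeaf).map prune ++
        List.replicate (2 - (cs.filter nonLeaf).length) leaf).getD i leaf) = leaf := by
      rw [List.getD_append_right _ _ _ _ hge]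
      simp only [List.getD_eq_getElem?_getD, List.getElem?_replicate]
      split <;> rfl
    simp only [hleaf, iff_false_intro (not_isInternal_leaf q), Nat.not_lt.2 hi, false_and]

theorem exists_nonLeaf_getElem_of_isInternal_getD {cs : List RTree} {j : ℕ} {p : List ℕ}
    (h : IsInternal (cs.getD j leaf) p) : ∃ hj : j < cs.length, nonLeaf cs[j] := by
  have hj : j < cs.length := by
    by_contra hj
    rw [List.getD_eq_default _ _ (Nat.le_of_not_lt hj)] at h
    exact not_isInternal_leaf p h
  rw [List.getD_eq_getElem _ _ hj] at h
  exact ⟨hj, nonLeaf_of_isInternal h⟩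

def prunePath : RTree → List ℕ → List ℕ
  | node cs, j :: p => cs.countPBefore nonLeaf j :: prunePath (cs.getD j leaf) p
  | _, _ => []

def unprunePath : RTree → List ℕ → List ℕ
  | node cs, i :: q =>
      cs.findIdxNth nonLeaf i :: unprunePath (cs.getD (cs.findIdxNth nonLeaf i) leaf) q
  | _, _ => []

theorem isInternal_prunePath : ∀ {t : RTree} {p : List ℕ}, IsInternal t p →
    IsInternal (prune t) (prunePath t p)
  | leaf, _, h => absurd h (not_isInternal_leaf _)
  | node cs, [], _ => by simp [prunePath, prune_node, isInternal_node_nil]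
  | node cs, j :: p, h => by
    rw [isInternal_node_cons] at h
    obtain ⟨_, hc⟩ := exists_nonLeaf_getElem_of_isInternal_getD h
    simp only [prunePath, isInternal_prune_node_cons,
      List.countPBefore_lt_countP_of_lt_length_of_pos hc,
      List.findIdxNth_countPBefore_of_lt_length_of_pos hc, isInternal_prunePath h, and_self]

theorem unprunePath_prunePath : ∀ {t : RTree} {p : List ℕ}, IsInternal t p →
    unprunePath t (prunePath t p) = p
  | leaf, _, h => absurd h (not_isInternal_leaf _)
  | node cs, [], _ => by simp [prunePath, unprunePath]
  | node cs, j :: p, h => by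
    rw [isInternal_node_cons] at h
    obtain ⟨_, hc⟩ := exists_nonLeaf_getElem_of_isInternal_getD h
    simp only [prunePath, unprunePath, List.findIdxNth_countPBefore_of_lt_length_of_pos hc,
      unprunePath_prunePath h]

theorem isInternal_unprunePath : ∀ {t : RTree} {q : List ℕ}, IsInternal (prune t) q →
    IsInternal t (unprunePath t q)
  | leaf, _, h => absurd h (by simpa [prune] using not_isInternal_leaf _)
  | node cs, [], _ => by simp [unprunePath, isInternal_node_nil]
  | node cs, i :: q, h => by
    rw [isInternal_prune_node_cons] at h
    simp only [unprunePath, isInternal_node_cons, isInternal_unprunePath h.2]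

theorem prunePath_unprunePath : ∀ {t : RTree} {q : List ℕ}, IsInternal (prune t) q →
    prunePath t (unprunePath t q) = q
  | leaf, _, h => absurd h (by simpa [prune] using not_isInternal_leaf _)
  | node cs, [], _ => by simp [prunePath, unprunePath]
  | node cs, i :: q, h => by
    rw [isInternal_prune_node_cons] at h
    simp only [prunePath, unprunePath, List.countPBefore_findIdxNth_of_lt_countP h.1,
      prunePath_unprunePath h.2]

theorem prunePath_prefix : ∀ {t : RTree} {p p' : List ℕ}, p <+: p' →
    prunePath t p <+: prunePath t p'
  | node cs, j :: p, j' :: p', h => by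
    obtain ⟨rfl, hp⟩ := List.cons_prefix_cons.1 h
    exact List.cons_prefix_cons.2 ⟨rfl, prunePath_prefix hp⟩
  | node _, [], _, _ | leaf, _, _, _ => by simp [prunePath]
  | node _, _ :: _, [], h => absurd h (by simp)

theorem unprunePath_prefix : ∀ {t : RTree} {q q' : List ℕ}, q <+: q' →
    unprunePath t q <+: unprunePath t q'
  | node cs, i :: q, i' :: q', h => by
    obtain ⟨rfl, hp⟩ := List.cons_prefix_cons.1 h
    exact List.cons_prefix_cons.2 ⟨rfl, unprunePath_prefix hp⟩
  | node _, [], _, _ | leaf, _, _, _ => by simp [unprunePath]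
  | node _, _ :: _, [], h => absurd h (by simp)

theorem isLabeledHistory_comp_iff {T T' : RTree} (e : Internal T ≃ Internal T')
    (hw : wcount T = wcount T') (he : ∀ u v, (e v).1 <+: (e u).1 ↔ v.1 <+: u.1)
    (g : Internal T' → Fin (wcount T')) :
    IsLabeledHistory T (Fin.cast hw.symm ∘ g ∘ e) ↔ IsLabeledHistory T' g := by
  have hne : ∀ u v : Internal T, (e v).1 ≠ (e u).1 ↔ v.1 ≠ u.1 := fun u v =>
    (Subtype.ext_iff.symm.trans (e.injective.eq_iff.trans Subtype.ext_iff)).not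
  unfold IsLabeledHistory
  refine and_congr ((finCongr hw.symm).comp_bijective _ |>.trans (e.bijective_comp g)) ?_
  rw [← e.forall_congr_right]
  refine forall_congr' fun u => ?_
  rw [← e.forall_congr_right]
  refine forall_congr' fun v => ?_
  simp only [Function.comp_apply, Fin.cast_lt_cast, he, hne]

theorem N_eq_of_equiv {T T' : RTree} (e : Internal T ≃ Internal T')
    (hw : wcount T = wcount T') (he : ∀ u v, (e v).1 <+: (e u).1 ↔ v.1 <+: u.1) :
    N T = N T' :=
  Nat.card_congr <| .symm <| (e.arrowCongr (finCongr hw)).symm.subtypeEquiv fun g =>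
    (isLabeledHistory_comp_iff e hw he g).symm

def internalPruneEquiv (T : RTree) : Internal T ≃ Internal (prune T) where
  toFun u := ⟨prunePath T u.1, isInternal_prunePath u.2⟩
  invFun v := ⟨unprunePath T v.1, isInternal_unprunePath v.2⟩
  left_inv u := Subtype.ext (unprunePath_prunePath u.2)
  right_inv v := Subtype.ext (prunePath_unprunePath v.2)

theorem internalPruneEquiv_prefix_iff (T : RTree) (u v : Internal T) :
    (internalPruneEquiv T v).1 <+: (internalPruneEquiv T u).1 ↔ v.1 <+: u.1 := by
  refine ⟨fun h => ?_, prunePath_prefix⟩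
  have h' : unprunePath T (prunePath T v.1) <+: unprunePath T (prunePath T u.1) :=
    unprunePath_prefix h
  rwa [unprunePath_prunePath v.2, unprunePath_prunePath u.2] at h'

theorem N_prune_eq_general (T : RTree) : N (prune T) = N T :=
  (N_eq_of_equiv (internalPruneEquiv T) (wcount_prune T).symm
    (internalPruneEquiv_prefix_iff T)).symm

/-- if every internal node of `T` has at most two non-leaf children
(`T` is bifurcatable), then the strictly bifurcating tree obtained by
pendant-pruning has the same number of labeled histories as `T`. -/
theorem N_prune_eq (T : RTree)
    (hbif : ∀ (p : List ℕ) (cs : List RTree),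
      subtreeAt p T = some (node cs) → (cs.filter nonLeaf).length ≤ 2) :
    N (prune T) = N T :=
  N_prune_eq_general T

end RTree
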